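/- arXiv:0812.4233 — 4 statements merged into one kernel-verified Lean document; each statement's English description precedes it below -/
import Mathlib

section
/- For every α > 0, the inequality 2α^{-3}(e^α - 1 - α - α²/2) ≤ α^{-2}(e^α - 1 - α) holds; that is, the asymptotic variance of the sliding blocks estimator is at most that of the disjoint blocks estimator. -/
lemma key_nonneg (α : ℝ) (hα : 0 ≤ α) : 0 ≤ (α - 2) * Real.exp α + α + 2 := by
  set f : ℝ → ℝ := fun x => (x - 2) * Real.exp x + x + 2 with hf
  have hderiv : ∀ x : ℝ, HasDerivAt f ((x - 1) * Real.exp x + 1) x := by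
    intro x
    have h1 : HasDerivAt (fun x : ℝ => (x - 2) * Real.exp x)
        (1 * Real.exp x + (x - 2) * Real.exp x) x :=
      ((hasDerivAt_id x).sub_const 2).mul (Real.hasDerivAt_exp x)
    have h2 : HasDerivAt f (1 * Real.exp x + (x - 2) * Real.exp x + 1) x :=
      (h1.add (hasDerivAt_id x)).add_const 2
    convert h2 using 1; ring
  have hmono : MonotoneOn f (Set.Ici (0:ℝ)) := by
    apply monotoneOn_of_deriv_nonneg (convex_Ici 0)
    · exact Continuous.continuousOn (by continuity)
    · intro x _
      exact (hderiv x).differentiableAt.differentiableWithinAt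
    · intro x hx
      rw [(hderiv x).deriv]
      have h1 : 1 - x ≤ Real.exp (-x) := by
        have := Real.add_one_le_exp (-x); linarith
      have h2 : Real.exp (-x) * Real.exp x = 1 := by
        rw [← Real.exp_add]; simp
      have h3 : 0 < Real.exp x := Real.exp_pos x
      nlinarith
  have h0 : f 0 = 0 := by simp [hf]
  have := hmono (Set.self_mem_Ici) hα hα
  simpa [h0] using this

theorem sliding_variance_le_disjoint_variance (α : ℝ) (hα : 0 < α) :
    2 / α ^ 3 * (Real.exp α - 1 - α - α ^ 2 / 2) ≤ 1 / α ^ 2 * (Real.exp α - 1 - α) := by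
  have hk := key_nonneg α hα.le
  rw [div_mul_eq_mul_div, div_mul_eq_mul_div, div_le_div_iff₀ (by positivity) (by positivity)]
  nlinarith [pow_pos hα 2, pow_pos hα 3, Real.exp_pos α]
end

section
/- For every α > 0, 2α^{-1}e^{-α}(1 - (1 + α)e^{-α}) ≤ e^{-α}(1 - e^{-α}); that is, the asymptotic variance of the sliding blocks estimator of F_r(u) is at most that of the disjoint blocks estimator. -/
private lemma key_deriv (x : ℝ) :
    HasDerivAt (fun y : ℝ => y + (2 + y) * Real.exp (-y))
      (1 - (1 + x) * Real.exp (-x)) x := by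
  have h1 : HasDerivAt (fun y : ℝ => Real.exp (-y)) (Real.exp (-x) * (-1)) x :=
    (hasDerivAt_neg x).exp
  have h2 : HasDerivAt (fun y : ℝ => (2 + y) * Real.exp (-y))
      ((0 + 1) * Real.exp (-x) + (2 + x) * (Real.exp (-x) * (-1))) x :=
    ((hasDerivAt_const x (2:ℝ)).add (hasDerivAt_id x)).mul h1
  have h3 := (hasDerivAt_id x).add h2
  exact h3.congr_deriv (by ring)

private lemma key_ineq (x : ℝ) (hx : 0 ≤ x) :
    2 ≤ x + (2 + x) * Real.exp (-x) := by
  have mono : MonotoneOn (fun y : ℝ => y + (2 + y) * Real.exp (-y)) (Set.Ici 0) := by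
    apply monotoneOn_of_deriv_nonneg (convex_Ici 0)
    · exact (Continuous.continuousOn (by continuity))
    · intro y hy
      exact (key_deriv y).differentiableAt.differentiableWithinAt
    · intro y hy
      rw [(key_deriv y).deriv]
      have h1 := Real.add_one_le_exp y
      have h2 := Real.exp_pos (-y)
      have h3 : Real.exp (-y) * Real.exp y = 1 := by
        rw [← Real.exp_add]; simp
      nlinarith
  have h0 : (0:ℝ) ∈ Set.Ici (0:ℝ) := Set.self_mem_Ici
  have hx' : x ∈ Set.Ici (0:ℝ) := hx
  have := mono h0 hx' hx
  simpa using this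

theorem sliding_F_variance_le_disjoint_F_variance (α : ℝ) (hα : 0 < α) :
    2 / α * Real.exp (-α) * (1 - (1 + α) * Real.exp (-α)) ≤
      Real.exp (-α) * (1 - Real.exp (-α)) := by
  have hkey := key_ineq α hα.le
  have ht := Real.exp_pos (-α)
  rw [div_mul_eq_mul_div, div_mul_eq_mul_div, div_le_iff₀ hα]
  nlinarith [mul_le_mul_of_nonneg_left hkey ht.le]
end

section
/- For fixed c² ≥ 0, the function α ↦ 2α^{-3}(e^α - 1 - α - α²/2) + α^{-1}c² is convex on (0, ∞). -/
open Real Set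

noncomputable def f1 (c2 x : ℝ) : ℝ :=
  2 * (Real.exp x - 1 - x) / x ^ 3 - 6 * (Real.exp x - 1 - x - x ^ 2 / 2) / x ^ 4 - c2 / x ^ 2

noncomputable def f2 (c2 x : ℝ) : ℝ :=
  2 * (Real.exp x - 1) / x ^ 3 - 12 * (Real.exp x - 1 - x) / x ^ 4
    + 24 * (Real.exp x - 1 - x - x ^ 2 / 2) / x ^ 5 + 2 * c2 / x ^ 3

lemma hasDerivAt_f (c2 x : ℝ) (hx : 0 < x) :
    HasDerivAt (fun α => 2 * (Real.exp α - 1 - α - α ^ 2 / 2) / α ^ 3 + c2 / α)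
      (f1 c2 x) x := by
  have hx3 : x ^ 3 ≠ 0 := by positivity
  have hx0 : x ≠ 0 := ne_of_gt hx
  have h1 : HasDerivAt (fun α : ℝ => 2 * (Real.exp α - 1 - α - α ^ 2 / 2))
      (2 * (Real.exp x - 1 - x)) x := by
    have := (Real.hasDerivAt_exp x)
    have h := (((this.sub_const 1).sub (hasDerivAt_id x)).sub
      (((hasDerivAt_pow 2 x)).div_const 2)).const_mul (2 : ℝ)
    refine h.congr_deriv ?_
    ring
  have h2 : HasDerivAt (fun α : ℝ => α ^ 3) (3 * x ^ 2) x := by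
    simpa using hasDerivAt_pow 3 x
  have hdiv := h1.div h2 hx3
  have h3 : HasDerivAt (fun α : ℝ => c2 / α) (-c2 / x ^ 2) x := by
    have h := (hasDerivAt_const x c2).div (hasDerivAt_id x) hx0
    refine h.congr_deriv ?_
    simp only [id]
    ring
  have := hdiv.add h3
  refine this.congr_deriv ?_
  unfold f1
  field_simp
  ring

lemma hasDerivAt_f1 (c2 x : ℝ) (hx : 0 < x) : HasDerivAt (f1 c2) (f2 c2 x) x := by
  have hx0 : x ≠ 0 := ne_of_gt hx
  have hx3 : x ^ 3 ≠ 0 := by positivity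
  have hx4 : x ^ 4 ≠ 0 := by positivity
  have hx2 : x ^ 2 ≠ 0 := by positivity
  have hA : HasDerivAt (fun α : ℝ => 2 * (Real.exp α - 1 - α))
      (2 * (Real.exp x - 1)) x := by
    have h := (((Real.hasDerivAt_exp x).sub_const 1).sub (hasDerivAt_id x)).const_mul (2 : ℝ)
    exact h
  have hB : HasDerivAt (fun α : ℝ => 6 * (Real.exp α - 1 - α - α ^ 2 / 2))
      (6 * (Real.exp x - 1 - x)) x := by
    have h := ((((Real.hasDerivAt_exp x).sub_const 1).sub (hasDerivAt_id x)).sub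
      ((hasDerivAt_pow 2 x).div_const 2)).const_mul (6 : ℝ)
    refine h.congr_deriv ?_; ring
  have hp3 : HasDerivAt (fun α : ℝ => α ^ 3) (3 * x ^ 2) x := by simpa using hasDerivAt_pow 3 x
  have hp4 : HasDerivAt (fun α : ℝ => α ^ 4) (4 * x ^ 3) x := by simpa using hasDerivAt_pow 4 x
  have hp2 : HasDerivAt (fun α : ℝ => α ^ 2) (2 * x) x := by simpa using hasDerivAt_pow 2 x
  have hC : HasDerivAt (fun α : ℝ => c2 / α ^ 2) (-(2 * c2) / x ^ 3) x := by
    have h := (hasDerivAt_const x c2).div hp2 hx2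
    refine h.congr_deriv ?_
    field_simp
    ring
  have := ((hA.div hp3 hx3).sub (hB.div hp4 hx4)).sub hC
  refine this.congr_deriv ?_
  unfold f2
  field_simp
  ring

lemma f2_nonneg (c2 x : ℝ) (hc2 : 0 ≤ c2) (hx : 0 < x) : 0 ≤ f2 c2 x := by
  have hE : 1 + x + x ^ 2 / 2 + x ^ 3 / 6 + x ^ 4 / 24 + x ^ 5 / 120 ≤ Real.exp x := by
    have := Real.sum_le_exp_of_nonneg hx.le 6
    simp [Finset.sum_range_succ, Nat.factorial] at this
    convert this using 1
  have hq : (0:ℝ) < x ^ 2 - 6 * x + 12 := by nlinarith [sq_nonneg (x - 3)]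
  have key : 0 ≤ (x ^ 2 - 6 * x + 12) * Real.exp x - x ^ 2 - 6 * x - 12 := by
    nlinarith [mul_le_mul_of_nonneg_left hE hq.le, sq_nonneg (x - 1), pow_pos hx 5,
      mul_pos (pow_pos hx 5) hq]
  have hx5 : (0:ℝ) < x ^ 5 := by positivity
  have hx3 : (0:ℝ) < x ^ 3 := by positivity
  have : f2 c2 x = 2 * ((x ^ 2 - 6 * x + 12) * Real.exp x - x ^ 2 - 6 * x - 12) / x ^ 5
      + 2 * c2 / x ^ 3 := by
    unfold f2
    field_simp
    ring
  rw [this]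
  positivity

theorem sliding_variance_function_convex (c2 : ℝ) (hc2 : 0 ≤ c2) :
    ConvexOn ℝ (Set.Ioi (0:ℝ))
      (fun α => 2 * (Real.exp α - 1 - α - α ^ 2 / 2) / α ^ 3 + c2 / α) := by
  set f := fun α : ℝ => 2 * (Real.exp α - 1 - α - α ^ 2 / 2) / α ^ 3 + c2 / α with hf
  have hdf : ∀ x ∈ Set.Ioi (0:ℝ), HasDerivAt f (f1 c2 x) x := fun x hx => hasDerivAt_f c2 x hx
  have hderiv : Set.EqOn (deriv f) (f1 c2) (Set.Ioi 0) := fun x hx => (hdf x hx).deriv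
  have hint : interior (Set.Ioi (0:ℝ)) = Set.Ioi 0 := isOpen_Ioi.interior_eq
  refine convexOn_of_deriv2_nonneg (convex_Ioi 0) ?_ ?_ ?_ ?_
  · intro x hx
    exact ((hdf x hx).differentiableAt.continuousAt).continuousWithinAt
  · rw [hint]
    intro x hx
    exact (hdf x hx).differentiableAt.differentiableWithinAt
  · rw [hint]
    intro x hx
    have heq : deriv f =ᶠ[nhds x] f1 c2 :=
      Filter.eventuallyEq_of_mem (isOpen_Ioi.mem_nhds hx) hderiv
    have : DifferentiableAt ℝ (f1 c2) x := (hasDerivAt_f1 c2 x hx).differentiableAt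
    exact (this.congr_of_eventuallyEq heq).differentiableWithinAt
  · rw [hint]
    intro x hx
    have heq : deriv f =ᶠ[nhds x] f1 c2 :=
      Filter.eventuallyEq_of_mem (isOpen_Ioi.mem_nhds hx) hderiv
    have h2 : deriv (deriv f) x = f2 c2 x := by
      rw [Filter.EventuallyEq.deriv_eq heq]
      exact (hasDerivAt_f1 c2 x hx).deriv
    simp only [Function.iterate_succ, Function.iterate_zero, Function.comp_apply, id_eq]
    rw [h2]
    exact f2_nonneg c2 x hc2 hx
end

section
/- For the max-autoregressive process with parameter θ ∈ (0,1], with θ_r(u) = -log Pr(M_r ≤ u)/(r·Pr(X₁ > u)) and thresholds u_r with r·Pr(X₁ > u_r) → τ, one has r(θ_r(u_r) - θ) → τθ/2 + (1 - θ) as r → ∞. -/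
open MeasureTheory ProbabilityTheory Filter

-- analytic helper lemmas
lemma slope_exp : Tendsto (fun v : ℝ => (1 - Real.exp (-v)) / v) (nhdsWithin 0 {0}ᶜ) (nhds 1) := by
  have h : HasDerivAt (fun x : ℝ => 1 - Real.exp (-x)) 1 0 := by
    have := ((hasDerivAt_id 0).neg.exp).const_sub 1
    simpa using this
  have := hasDerivAt_iff_tendsto_slope.mp h
  refine this.congr (fun v => ?_)
  simp [slope_def_field, div_eq_inv_mul]


lemma g_bound {v : ℝ} (hv0 : 0 < v) (hv1 : v ≤ 1) :
    |(Real.exp (-v) - 1 + v) / v ^ 2 - 1 / 2| ≤ (2 / 9) * v := by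
  have hb := Real.exp_bound (x := -v) (by rw [abs_neg, abs_of_pos hv0]; exact hv1) (n := 3) (by norm_num)
  have hs : (∑ i ∈ Finset.range 3, (-v) ^ i / (i.factorial : ℝ)) = 1 - v + v ^ 2 / 2 := by
    rw [Finset.sum_range_succ, Finset.sum_range_succ, Finset.sum_range_one]
    norm_num [Nat.factorial]
    ring
  rw [hs, abs_neg, abs_of_pos hv0] at hb
  have h2 : |Real.exp (-v) - 1 + v - v ^ 2 / 2| ≤ v ^ 3 * (2/9) := by
    calc |Real.exp (-v) - 1 + v - v ^ 2 / 2| = |Real.exp (-v) - (1 - v + v ^ 2 / 2)| := by ring_nf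
    _ ≤ v ^ 3 * ((3:ℕ).succ / ((3:ℕ).factorial * 3)) := hb
    _ = v ^ 3 * (2/9) := by norm_num [Nat.factorial]
  have hv2 : (0:ℝ) < v ^ 2 := by positivity
  have : (Real.exp (-v) - 1 + v) / v ^ 2 - 1 / 2 = (Real.exp (-v) - 1 + v - v ^ 2 / 2) / v ^ 2 := by
    field_simp
  rw [this, abs_div, abs_of_pos hv2, div_le_iff₀ hv2]
  calc |Real.exp (-v) - 1 + v - v ^ 2 / 2| ≤ v ^ 3 * (2/9) := h2
  _ = 2 / 9 * v * v ^ 2 := by ring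


/-- Bias of `θ_r(u_r)` for the max-autoregressive process:
`r(θ_r(u_r) - θ) → τθ/2 + (1 - θ)`. -/
theorem max_autoregressive_bias {Ω : Type*} [MeasurableSpace Ω]
    (μ : Measure Ω) [IsProbabilityMeasure μ]
    (θ : ℝ) (hθ : 0 < θ) (hθ1 : θ ≤ 1)
    (W : ℕ → Ω → ℝ) (hWmeas : ∀ i, Measurable (W i))
    (hWindep : iIndepFun W μ)
    (hWfrechet : ∀ i, ∀ x : ℝ, 0 < x →
      μ {ω | W i ω ≤ x} = ENNReal.ofReal (Real.exp (-1 / x)))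
    (X : ℕ → Ω → ℝ)
    (hX1 : X 1 = fun ω => W 1 ω / θ)
    (hXn : ∀ n : ℕ, 2 ≤ n → X n = fun ω => max ((1 - θ) * X (n - 1) ω) (W n ω))
    (u : ℕ → ℝ) (hu : ∀ r, 0 < u r) (τ : ℝ) (hτ : 0 < τ)
    (hthr : Tendsto (fun r : ℕ => (r : ℝ) * (μ {ω | u r < X 1 ω}).toReal)
      atTop (nhds τ))
    (θr : ℕ → ℝ)
    (hθr : θr = fun r =>
      -Real.log ((μ {ω | ∀ i ∈ Finset.Icc 1 r, X i ω ≤ u r}).toReal) /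
        ((r : ℝ) * (μ {ω | u r < X 1 ω}).toReal)) :
    Tendsto (fun r : ℕ => (r : ℝ) * (θr r - θ)) atTop
      (nhds (τ * θ / 2 + (1 - θ))) := by
  -- notation
  set v : ℕ → ℝ := fun r => (θ * u r)⁻¹ with hv_def
  have hv_pos : ∀ r, 0 < v r := fun r => inv_pos.mpr (mul_pos hθ (hu r))
  set P : ℕ → ℝ := fun r => 1 - Real.exp (-(v r)) with hP_def
  have hP_pos : ∀ r, 0 < P r := by
    intro r
    have : Real.exp (-(v r)) < 1 := by
      rw [Real.exp_lt_one_iff]; linarith [hv_pos r]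
    simp only [hP_def]; linarith
  -- exceedance probability of X 1
  have hfre : ∀ i r, μ {ω | W i ω ≤ θ * u r} = ENNReal.ofReal (Real.exp (-(v r))) := by
    intro i r
    have h := hWfrechet i (θ * u r) (mul_pos hθ (hu r))
    rw [h]
    congr 1
    rw [hv_def]
    rw [neg_div, one_div]
  have hPeq : ∀ r, (μ {ω | u r < X 1 ω}).toReal = P r := by
    intro r
    have hset : {ω | u r < X 1 ω} = {ω | W 1 ω ≤ θ * u r}ᶜ := by
      ext ω
      simp only [Set.mem_setOf_eq, Set.mem_compl_iff, hX1, not_le]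
      rw [lt_div_iff₀ hθ]
      constructor
      · intro h; linarith [h]
      · intro h; linarith [h]
    have hms : MeasurableSet {ω | W 1 ω ≤ θ * u r} := by
      have : {ω | W 1 ω ≤ θ * u r} = W 1 ⁻¹' Set.Iic (θ * u r) := rfl
      rw [this]; exact (hWmeas 1) measurableSet_Iic
    rw [hset, prob_compl_eq_one_sub hms, hfre 1 r,
      ENNReal.toReal_sub_of_le (ENNReal.ofReal_le_one.mpr (Real.exp_le_one_iff.mpr (by linarith [hv_pos r] : -(v r) ≤ 0))) ENNReal.one_ne_top]
    rw [ENNReal.toReal_one, ENNReal.toReal_ofReal (Real.exp_pos _).le]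
  have hthr' : Tendsto (fun r : ℕ => (r : ℝ) * P r) atTop (nhds τ) := by
    refine hthr.congr fun r => by rw [hPeq]
  -- the block maximum probability
  have hQeq : ∀ r : ℕ, 1 ≤ r →
      (μ {ω | ∀ i ∈ Finset.Icc 1 r, X i ω ≤ u r}).toReal
        = Real.exp (-(v r * (1 + θ * ((r : ℝ) - 1)))) := by
    intro r hr
    have hsets : {ω | ∀ i ∈ Finset.Icc 1 r, X i ω ≤ u r}
        = ⋂ i ∈ Finset.Icc 1 r, W i ⁻¹' Set.Iic (if i = 1 then θ * u r else u r) := by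
      ext ω
      simp only [Set.mem_setOf_eq, Set.mem_iInter, Set.mem_preimage, Set.mem_Iic]
      constructor
      · intro h i hi
        rw [Finset.mem_Icc] at hi
        split_ifs with h1
        · subst h1
          have := h 1 (Finset.mem_Icc.mpr hi)
          rw [hX1] at this
          simp only at this
          rw [div_le_iff₀ hθ] at this
          linarith
        · have h2 : 2 ≤ i := by omega
          have := h i (Finset.mem_Icc.mpr hi)
          rw [hXn i h2] at this
          simp only at this
          exact le_trans (le_max_right _ _) this
      · intro h
        have key : ∀ i, 1 ≤ i → i ≤ r → X i ω ≤ u r := by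
          intro i hi1
          induction i, hi1 using Nat.le_induction with
          | base =>
            intro h1r
            have := h 1 (Finset.mem_Icc.mpr ⟨le_refl 1, h1r⟩)
            rw [if_pos rfl] at this
            rw [hX1]
            simp only
            rw [div_le_iff₀ hθ]
            linarith
          | succ n hn ih =>
            intro hnr
            have hXn' := hXn (n + 1) (by omega)
            have hWn := h (n + 1) (Finset.mem_Icc.mpr ⟨by omega, hnr⟩)
            rw [if_neg (by omega)] at hWn
            rw [hXn']
            simp only [Nat.add_sub_cancel]
            refine max_le ?_ hWn
            have hXnle := ih (by omega)
            rcases le_or_gt 0 (X n ω) with hx | hx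
            · calc (1 - θ) * X n ω ≤ 1 * X n ω := by nlinarith
              _ ≤ u r := by linarith
            · have : (1 - θ) * X n ω ≤ 0 := by nlinarith
              linarith [hu r]
        intro i hi
        rw [Finset.mem_Icc] at hi
        exact key i hi.1 hi.2
    have hmeas : μ (⋂ i ∈ Finset.Icc 1 r, W i ⁻¹' Set.Iic (if i = 1 then θ * u r else u r))
        = ∏ i ∈ Finset.Icc 1 r, μ (W i ⁻¹' Set.Iic (if i = 1 then θ * u r else u r)) := by
      refine hWindep.meas_biInter fun i _ => ?_
      exact ⟨Set.Iic (if i = 1 then θ * u r else u r), measurableSet_Iic, rfl⟩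
    have hval : ∀ i, μ (W i ⁻¹' Set.Iic (if i = 1 then θ * u r else u r))
        = ENNReal.ofReal (Real.exp (if i = 1 then -(v r) else -1 / u r)) := by
      intro i
      split_ifs with h1
      · exact hfre i r
      · exact hWfrechet i (u r) (hu r)
    have hprod : (∏ i ∈ Finset.Icc 1 r, μ (W i ⁻¹' Set.Iic (if i = 1 then θ * u r else u r)))
        = ENNReal.ofReal (Real.exp (∑ i ∈ Finset.Icc 1 r, if i = 1 then -(v r) else -1 / u r)) := by
      calc (∏ i ∈ Finset.Icc 1 r, μ (W i ⁻¹' Set.Iic (if i = 1 then θ * u r else u r)))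
          = ∏ i ∈ Finset.Icc 1 r, ENNReal.ofReal (Real.exp (if i = 1 then -(v r) else -1 / u r)) :=
        Finset.prod_congr rfl fun i _ => hval i
      _ = ENNReal.ofReal (∏ i ∈ Finset.Icc 1 r, Real.exp (if i = 1 then -(v r) else -1 / u r)) := by
        rw [← ENNReal.ofReal_prod_of_nonneg (fun i _ => (Real.exp_pos _).le)]
      _ = ENNReal.ofReal (Real.exp (∑ i ∈ Finset.Icc 1 r, if i = 1 then -(v r) else -1 / u r)) := by
        rw [Real.exp_sum]
    have hsum : (∑ i ∈ Finset.Icc 1 r, if i = 1 then -(v r) else -1 / u r)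
        = -(v r * (1 + θ * ((r : ℝ) - 1))) := by
      have hins : Finset.Icc 1 r = insert 1 (Finset.Icc 2 r) := by
        ext i
        simp only [Finset.mem_Icc, Finset.mem_insert]
        omega
      rw [hins, Finset.sum_insert (by simp [Finset.mem_Icc])]
      rw [if_pos rfl]
      have h2 : (∑ i ∈ Finset.Icc 2 r, if i = 1 then -(v r) else -1 / u r)
          = ((r : ℝ) - 1) * (-1 / u r) := by
        have hconst : (∑ i ∈ Finset.Icc 2 r, if i = 1 then -(v r) else -1 / u r)
            = ∑ _i ∈ Finset.Icc 2 r, (-1 / u r) := by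
          refine Finset.sum_congr rfl fun i hi => ?_
          rw [Finset.mem_Icc] at hi
          rw [if_neg (by omega)]
        rw [hconst, Finset.sum_const, Nat.card_Icc]
        have : ((r + 1 - 2 : ℕ) : ℝ) = (r : ℝ) - 1 := by
          have : r + 1 - 2 = r - 1 := by omega
          rw [this, Nat.cast_sub hr, Nat.cast_one]
        rw [nsmul_eq_mul, this]
      rw [h2, hv_def]
      have hu0 := (hu r).ne'
      field_simp
      ring
    rw [hsets, hmeas, hprod, hsum, ENNReal.toReal_ofReal (Real.exp_pos _).le]
  -- formula for θr for r ≥ 1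
  have hθr_eq : ∀ r : ℕ, 1 ≤ r →
      θr r = (v r * (1 + θ * ((r : ℝ) - 1))) / ((r : ℝ) * P r) := by
    intro r hr
    rw [hθr]
    simp only
    rw [hQeq r hr, hPeq, Real.log_exp, neg_neg]
  -- analysis
  have hP0 : Tendsto P atTop (nhds 0) := by
    have h1 : Tendsto (fun r : ℕ => ((r : ℝ))⁻¹) atTop (nhds 0) := tendsto_inv_atTop_zero.comp tendsto_natCast_atTop_atTop
    have := hthr'.mul h1
    rw [mul_zero] at this
    refine this.congr' ?_
    filter_upwards [eventually_ge_atTop 1] with r hr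
    have : ((r : ℝ)) ≠ 0 := by positivity
    field_simp
  have hv0 : Tendsto v atTop (nhds 0) := by
    have h1 : Tendsto (fun r : ℕ => 1 - P r) atTop (nhds 1) := by
      have h2 : Tendsto (fun r : ℕ => (1 : ℝ) - P r) atTop (nhds (1 - 0)) :=
        tendsto_const_nhds.sub hP0
      simpa using h2
    have hlog : Tendsto (fun r : ℕ => Real.log (1 - P r)) atTop (nhds (Real.log 1)) :=
      (Real.continuousAt_log one_ne_zero).tendsto.comp h1
    rw [Real.log_one] at hlog
    have := hlog.neg
    rw [neg_zero] at this
    refine this.congr fun r => ?_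
    have : (1 : ℝ) - P r = Real.exp (-(v r)) := by simp [hP_def]
    rw [this, Real.log_exp, neg_neg]
  have hA : Tendsto (fun r : ℕ => (r : ℝ) * v r) atTop (nhds τ) := by
    have hslope : Tendsto (fun r : ℕ => P r / v r) atTop (nhds 1) := by
      refine slope_exp.comp ?_
      refine tendsto_nhdsWithin_of_tendsto_nhds_of_eventually_within _ hv0 ?_
      filter_upwards with r
      exact (hv_pos r).ne'
    have hinv : Tendsto (fun r : ℕ => v r / P r) atTop (nhds 1) := by
      have := hslope.inv₀ one_ne_zero
      rw [inv_one] at this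
      refine this.congr fun r => ?_
      rw [inv_div]
    have := hthr'.mul hinv
    rw [mul_one] at this
    refine this.congr fun r => ?_
    have hP := (hP_pos r).ne'
    field_simp
  have hG : Tendsto (fun r : ℕ => (Real.exp (-(v r)) - 1 + v r) / (v r) ^ 2) atTop (nhds (1 / 2)) := by
    rw [tendsto_iff_norm_sub_tendsto_zero]
    have hbnd : Tendsto (fun r : ℕ => 2 / 9 * v r) atTop (nhds 0) := by
      have h9 := hv0.const_mul (2 / 9 : ℝ)
      rw [mul_zero] at h9
      exact h9
    refine squeeze_zero' ?_ ?_ hbnd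
    · filter_upwards with r; exact norm_nonneg _
    · filter_upwards [hv0.eventually_le_const (by norm_num : (0:ℝ) < 1)] with r hr
      · rw [Real.norm_eq_abs]
        exact g_bound (hv_pos r) hr
  -- final assembly
  have hfinal : Tendsto (fun r : ℕ =>
      ((r : ℝ) * v r - θ * ((r : ℝ) * v r)
        + θ * ((r : ℝ) * v r) ^ 2 * ((Real.exp (-(v r)) - 1 + v r) / (v r) ^ 2))
      / ((r : ℝ) * P r)) atTop (nhds (τ * θ / 2 + (1 - θ))) := by
    have hnum : Tendsto (fun r : ℕ =>
        (r : ℝ) * v r - θ * ((r : ℝ) * v r)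
          + θ * ((r : ℝ) * v r) ^ 2 * ((Real.exp (-(v r)) - 1 + v r) / (v r) ^ 2))
        atTop (nhds (τ - θ * τ + θ * τ ^ 2 * (1 / 2))) :=
      ((hA.sub (hA.const_mul θ)).add (((hA.pow 2).const_mul θ).mul hG))
    have := hnum.div hthr' hτ.ne'
    have heq : (τ - θ * τ + θ * τ ^ 2 * (1 / 2)) / τ = τ * θ / 2 + (1 - θ) := by
      field_simp
      ring
    rwa [heq] at this
  refine hfinal.congr' ?_
  filter_upwards [eventually_ge_atTop 1] with r hr
  rw [hθr_eq r hr]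
  have hv := (hv_pos r).ne'
  have hP := (hP_pos r).ne'
  have hr0 : ((r : ℝ)) ≠ 0 := by positivity
  field_simp
  ring
end
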